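/- Let U₁ = [(B₁,ρ₁),(B₂,τ)] and U₂ = [(B₁,ρ₂),(B₂,τ)] be infinite matrices built from the same basis pair with two orderings ρ₁, ρ₂ of B₁. If ρ₁ is optimal in lines, meaning μ(π_N U₁) = Θ(f(N)) for some decreasing f : ℕ → ℝ_{>0}, then f(N) = O(μ(R_N U₂)) and μ(R_N U₁) = O(μ(R_N U₂)); i.e., ρ₁ is an optimal ordering. -/

import Mathlib

open scoped InnerProductSpace

variable {H : Type*} [NormedAddCommGroup H] [InnerProductSpace ℂ H]

/-- The line coherence `μ(π_N U)` of `U = [(B₁,ρ),(B₂,τ)]`, `U_{m,n} = ⟨τ(n), ρ(m)⟩`. -/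
noncomputable def muPi {B₁ B₂ : Set H} (ρ : ℕ ≃ B₁) (τ : ℕ ≃ B₂) (N : ℕ) : ℝ :=
  ⨆ n : ℕ, ‖(⟪(τ n : H), (ρ N : H)⟫_ℂ : ℂ)‖ ^ 2

/-- The block coherence `μ(R_N U) = sup_{M ≥ N} μ(π_M U)`. -/
noncomputable def muR {B₁ B₂ : Set H} (ρ : ℕ ≃ B₁) (τ : ℕ ≃ B₂) (N : ℕ) : ℝ :=
  ⨆ M : {M : ℕ // N ≤ M}, muPi ρ τ M

/-
Since `ρ₁(0), …, ρ₁(N)` are `N + 1` distinct elements of `B₁`, one of them sits at a position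
`M ≥ N` in the ordering `ρ₂`; its row has the same coherence in `U₁` and `U₂`, so
`C₁ f(N) ≤ C₁ f(K) ≤ μ(π_K U₁) = μ(π_M U₂) ≤ μ(R_N U₂)`. Conversely `f` decreasing gives
`μ(R_N U₁) ≤ C₂ f(N)`, and the two bounds combine to `μ(R_N U₁) ≤ (C₂ / C₁) μ(R_N U₂)`.
-/

theorem Nat.exists_le_le_apply_of_injective {σ : ℕ → ℕ} (hσ : σ.Injective) (N : ℕ) :
    ∃ K ≤ N, N ≤ σ K := by
  by_contra! h
  have hcard : (Finset.range (N + 1)).card ≤ (Finset.range N).card :=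
    Finset.card_le_card_of_injOn σ
      (fun k hk => by simpa using h k (Nat.lt_succ_iff.mp (Finset.mem_range.mp hk)))
      hσ.injOn
  simp at hcard

section Coherence

variable {B₁ B₂ : Set H}

theorem muPi_congr {ρ ρ' : ℕ ≃ B₁} (τ : ℕ ≃ B₂) {K M : ℕ} (h : ρ K = ρ' M) :
    muPi ρ τ K = muPi ρ' τ M := by
  rw [muPi, muPi, h]

theorem muR_le_of_muPi_le {ρ : ℕ ≃ B₁} {τ : ℕ ≃ B₂} {g : ℕ → ℝ} (hg : Antitone g)
    (h : ∀ M, muPi ρ τ M ≤ g M) (N : ℕ) : muR ρ τ N ≤ g N :=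
  ciSup_le fun M => (h M).trans (hg M.2)

variable (hB₁ : Orthonormal ℂ ((↑) : B₁ → H)) (hB₂ : Orthonormal ℂ ((↑) : B₂ → H))
include hB₁ hB₂

theorem muPi_le_one (ρ : ℕ ≃ B₁) (τ : ℕ ≃ B₂) (M : ℕ) : muPi ρ τ M ≤ 1 :=
  ciSup_le fun n => by
    have h := norm_inner_le_norm (𝕜 := ℂ) (τ n : H) (ρ M : H)
    rw [hB₂.1 (τ n), hB₁.1 (ρ M), one_mul] at h
    exact pow_le_one₀ (norm_nonneg _) h

theorem muPi_le_muR (ρ : ℕ ≃ B₁) (τ : ℕ ≃ B₂) {N M : ℕ} (hNM : N ≤ M) :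
    muPi ρ τ M ≤ muR ρ τ N :=
  le_ciSup (f := fun M : {M : ℕ // N ≤ M} => muPi ρ τ M)
    ⟨1, Set.forall_mem_range.2 fun M => muPi_le_one hB₁ hB₂ ρ τ M⟩ ⟨M, hNM⟩

theorem exists_le_muPi_le_muR (ρ₁ ρ₂ : ℕ ≃ B₁) (τ : ℕ ≃ B₂) (N : ℕ) :
    ∃ K ≤ N, muPi ρ₁ τ K ≤ muR ρ₂ τ N := by
  obtain ⟨K, hKN, hNM⟩ :=
    Nat.exists_le_le_apply_of_injective (ρ₂.symm.injective.comp ρ₁.injective) N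
  refine ⟨K, hKN, ?_⟩
  rw [muPi_congr τ (ρ' := ρ₂) (ρ₂.apply_symm_apply (ρ₁ K)).symm]
  exact muPi_le_muR hB₁ hB₂ ρ₂ τ hNM

end Coherence

theorem statement18_general {B₁ B₂ : Set H}
    (hB₁ : Orthonormal ℂ ((↑) : B₁ → H)) (hB₂ : Orthonormal ℂ ((↑) : B₂ → H))
    (ρ₁ ρ₂ : ℕ ≃ B₁) (τ : ℕ ≃ B₂)
    (f : ℕ → ℝ) (hf : Antitone f)
    (C₁ C₂ : ℝ) (hC₁ : 0 < C₁) (hC₂ : 0 < C₂)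
    (hΘ : ∀ N : ℕ, C₁ * f N ≤ muPi ρ₁ τ N ∧ muPi ρ₁ τ N ≤ C₂ * f N) :
    (∃ C : ℝ, 0 < C ∧ ∀ N : ℕ, f N ≤ C * muR ρ₂ τ N) ∧
      (∃ C : ℝ, 0 < C ∧ ∀ N : ℕ, muR ρ₁ τ N ≤ C * muR ρ₂ τ N) := by
  have hlower : ∀ N, C₁ * f N ≤ muR ρ₂ τ N := fun N => by
    obtain ⟨K, hKN, hK⟩ := exists_le_muPi_le_muR hB₁ hB₂ ρ₁ ρ₂ τ N
    calc C₁ * f N ≤ C₁ * f K := mul_le_mul_of_nonneg_left (hf hKN) hC₁.le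
      _ ≤ muPi ρ₁ τ K := (hΘ K).1
      _ ≤ muR ρ₂ τ N := hK
  have hupper : ∀ N, muR ρ₁ τ N ≤ C₂ * f N :=
    muR_le_of_muPi_le (hf.const_mul hC₂.le) fun M => (hΘ M).2
  refine ⟨⟨C₁⁻¹, inv_pos.2 hC₁, fun N => ?_⟩, ⟨C₂ / C₁, div_pos hC₂ hC₁, fun N => ?_⟩⟩
  · rw [inv_mul_eq_div, le_div_iff₀ hC₁, mul_comm]
    exact hlower N
  · calc muR ρ₁ τ N ≤ C₂ * f N := hupper N
      _ = C₂ / C₁ * (C₁ * f N) := by field_simp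
      _ ≤ C₂ / C₁ * muR ρ₂ τ N := by gcongr; exact hlower N

/-- If `ρ₁` is optimal in lines for the basis pair `(B₁, B₂)` — i.e.
`μ(π_N U₁) = Θ(f(N))` for a decreasing positive `f`, where
`U₁ = [(B₁,ρ₁),(B₂,τ)]` — then for any other ordering `ρ₂` of `B₁`, with
`U₂ = [(B₁,ρ₂),(B₂,τ)]`, one has `f(N) = O(μ(R_N U₂))` and
`μ(R_N U₁) = O(μ(R_N U₂))`; i.e. `ρ₁` is an optimal ordering. -/
theorem statement18 {B₁ B₂ : Set H}
    (hB₁ : Orthonormal ℂ ((↑) : B₁ → H)) (hB₂ : Orthonormal ℂ ((↑) : B₂ → H))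
    (ρ₁ ρ₂ : ℕ ≃ B₁) (τ : ℕ ≃ B₂)
    (f : ℕ → ℝ) (hfpos : ∀ N, 0 < f N) (hf : Antitone f)
    (C₁ C₂ : ℝ) (hC₁ : 0 < C₁) (hC₂ : 0 < C₂)
    (hΘ : ∀ N : ℕ, C₁ * f N ≤ muPi ρ₁ τ N ∧ muPi ρ₁ τ N ≤ C₂ * f N) :
    (∃ C : ℝ, 0 < C ∧ ∀ N : ℕ, f N ≤ C * muR ρ₂ τ N) ∧
      (∃ C : ℝ, 0 < C ∧ ∀ N : ℕ, muR ρ₁ τ N ≤ C * muR ρ₂ τ N) :=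
  statement18_general hB₁ hB₂ ρ₁ ρ₂ τ f hf C₁ C₂ hC₁ hC₂ hΘ
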